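/- Let A, A* be n×n complex matrices that are conjugate transposes of each other and B ∈ ℂ^{n×m}. Suppose for every σ > 0 the Hautus condition holds: every eigenvector ε of A* satisfies B* ε ≠ 0 unless ε = 0. Then for every σ > 0 there exists a matrix G ∈ ℂ^{m×n} such that all eigenvalues of A + BG have real part strictly less than -σ. -/

import Mathlib

open Matrix NormedSpace Set

/-- If `φ` vanishes on `[0,1)` and has derivative `ψ`, then `ψ` vanishes on `[0,1)`. -/
lemma zero_deriv_on_Ico {E : Type*} [NormedAddCommGroup E] [NormedSpace ℝ E]
    {φ ψ : ℝ → E} (h : ∀ t, HasDerivAt φ (ψ t) t)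
    (h0 : ∀ t ∈ Set.Ico (0:ℝ) 1, φ t = 0) :
    ∀ t ∈ Set.Ico (0:ℝ) 1, ψ t = 0 := by
  intro t ht
  have hev : (fun _ : ℝ => (0:E)) =ᶠ[nhdsWithin t (Set.Ici t)] φ := by
    filter_upwards [self_mem_nhdsWithin,
      mem_nhdsWithin_of_mem_nhds (Iio_mem_nhds ht.2)] with x hx1 hx2
    exact (h0 x ⟨le_trans ht.1 hx1, hx2⟩).symm
  have hz : HasDerivWithinAt φ 0 (Set.Ici t) t :=
    (hasDerivWithinAt_const t _ (0:E)).congr_of_eventuallyEq hev.symm (h0 t ht)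
  have hd : HasDerivWithinAt φ (ψ t) (Set.Ici t) t := (h t).hasDerivWithinAt
  have h1 := hd.derivWithin (uniqueDiffOn_Ici t t Set.self_mem_Ici)
  have h2 := hz.derivWithin (uniqueDiffOn_Ici t t Set.self_mem_Ici)
  rw [← h1, ← h2]

/-- If `Bᴴ (Mᵏ v) = 0` for all `k` and no common eigenvector, then `v = 0`. -/
lemma vanish_of_pow {n m : ℕ} (M : Matrix (Fin n) (Fin n) ℂ) (B : Matrix (Fin n) (Fin m) ℂ)
    (hH : ∀ (ε : Fin n → ℂ) (μ : ℂ), M *ᵥ ε = μ • ε → Bᴴ *ᵥ ε = 0 → ε = 0)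
    (v : Fin n → ℂ) (hv : ∀ k : ℕ, Bᴴ *ᵥ (M ^ k *ᵥ v) = 0) : v = 0 := by
  by_contra hv0
  set T := M.mulVecLin with hT
  set V := Submodule.span ℂ (Set.range fun k : ℕ => M ^ k *ᵥ v) with hV
  have hvV : v ∈ V := Submodule.subset_span ⟨0, by simp⟩
  have hinv : ∀ x ∈ V, T x ∈ V := by
    intro x hx
    induction hx using Submodule.span_induction with
    | mem x h =>
      obtain ⟨k, rfl⟩ := h
      refine Submodule.subset_span ⟨k+1, ?_⟩
      simp [hT, Matrix.mulVecLin_apply, Matrix.mulVec_mulVec, pow_succ']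
    | zero => simp
    | add x y _ _ hx hy => simpa using Submodule.add_mem V hx hy
    | smul c x _ hx => simpa using Submodule.smul_mem V c hx
  have hBV : ∀ x ∈ V, Bᴴ *ᵥ x = 0 := by
    intro x hx
    have : V ≤ LinearMap.ker (Matrix.mulVecLin Bᴴ) := by
      rw [hV, Submodule.span_le]
      rintro _ ⟨k, rfl⟩
      simpa [LinearMap.mem_ker, Matrix.mulVecLin_apply] using hv k
    simpa [LinearMap.mem_ker, Matrix.mulVecLin_apply] using this hx
  haveI : Nontrivial V := ⟨⟨⟨v, hvV⟩, 0, by simpa [Submodule.mk_eq_zero] using hv0⟩⟩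
  obtain ⟨μ, hμ⟩ := Module.End.exists_eigenvalue (T.restrict hinv)
  obtain ⟨x, hx⟩ := hμ.exists_hasEigenvector
  have hxv : M *ᵥ (x : Fin n → ℂ) = μ • (x : Fin n → ℂ) := by
    have := congrArg (Subtype.val) hx.apply_eq_smul
    simpa [LinearMap.restrict_apply, hT, Matrix.mulVecLin_apply] using this
  have := hH x μ hxv (hBV x x.2)
  exact hx.2 (by simpa [Submodule.coe_eq_zero] using this)

lemma star_dot_self {m : ℕ} (w : Fin m → ℂ) :
    star w ⬝ᵥ w = ((∑ i, Complex.normSq (w i) : ℝ) : ℂ) := by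
  simp [dotProduct, Complex.normSq_eq_conj_mul_self]

lemma sq_form {n m : ℕ} (M : Matrix (Fin n) (Fin m) ℂ) (v : Fin n → ℂ) :
    star v ⬝ᵥ ((M * Mᴴ) *ᵥ v) = ((∑ i, Complex.normSq ((Mᴴ *ᵥ v) i) : ℝ) : ℂ) := by
  rw [← star_dot_self]
  rw [← Matrix.mulVec_mulVec, Matrix.dotProduct_mulVec]
  congr 1
  have := Matrix.star_mulVec (M := Mᴴ) (v := v)
  simpa using this.symm

attribute [local instance] Matrix.linftyOpNormedAddCommGroup Matrix.linftyOpNormedRing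
  Matrix.linftyOpNormedAlgebra

variable {n m : ℕ}

noncomputable instance matENormedAddCommMonoid :
    ENormedAddCommMonoid (Matrix (Fin n) (Fin n) ℂ) :=
  NormedAddCommGroup.toENormedAddCommMonoid

noncomputable def qfCLM (v : Fin n → ℂ) : Matrix (Fin n) (Fin n) ℂ →L[ℂ] ℂ :=
  LinearMap.toContinuousLinearMap
    { toFun := fun M => star v ⬝ᵥ (M *ᵥ v)
      map_add' := fun M N => by simp [Matrix.add_mulVec, dotProduct_add]
      map_smul' := fun c M => by
        simp [Matrix.smul_mulVec, dotProduct_smul] }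

lemma qf_integral (v : Fin n → ℂ) (F : ℝ → Matrix (Fin n) (Fin n) ℂ)
    (hF : IntervalIntegrable F MeasureTheory.volume 0 1) :
    star v ⬝ᵥ ((∫ t in (0:ℝ)..1, F t) *ᵥ v) = ∫ t in (0:ℝ)..1, star v ⬝ᵥ (F t *ᵥ v) := by
  have := (qfCLM v).intervalIntegral_comp_comm hF
  exact this.symm

noncomputable def ctCLM : Matrix (Fin n) (Fin n) ℂ →L[ℝ] Matrix (Fin n) (Fin n) ℂ :=
  LinearMap.toContinuousLinearMap
    { toFun := fun M => Mᴴ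
      map_add' := fun M N => conjTranspose_add M N
      map_smul' := fun c M => by simp [conjTranspose_smul] }

lemma ct_integral (F : ℝ → Matrix (Fin n) (Fin n) ℂ)
    (hF : IntervalIntegrable F MeasureTheory.volume 0 1) :
    (∫ t in (0:ℝ)..1, F t)ᴴ = ∫ t in (0:ℝ)..1, (F t)ᴴ := by
  have := (ctCLM (n := n)).intervalIntegral_comp_comm hF
  exact this.symm

lemma mulL_integral (C : Matrix (Fin n) (Fin n) ℂ) (F : ℝ → Matrix (Fin n) (Fin n) ℂ)
    (hF : IntervalIntegrable F MeasureTheory.volume 0 1) :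
    C * (∫ t in (0:ℝ)..1, F t) = ∫ t in (0:ℝ)..1, C * F t := by
  have := (LinearMap.toContinuousLinearMap (LinearMap.mulLeft ℂ C)).intervalIntegral_comp_comm hF
  exact this.symm

lemma mulR_integral (C : Matrix (Fin n) (Fin n) ℂ) (F : ℝ → Matrix (Fin n) (Fin n) ℂ)
    (hF : IntervalIntegrable F MeasureTheory.volume 0 1) :
    (∫ t in (0:ℝ)..1, F t) * C = ∫ t in (0:ℝ)..1, F t * C := by
  have := (LinearMap.toContinuousLinearMap (LinearMap.mulRight ℂ C)).intervalIntegral_comp_comm hF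
  exact this.symm

noncomputable def mvCLM {n m : ℕ} (Q : Matrix (Fin m) (Fin n) ℂ) (v : Fin n → ℂ) :
    Matrix (Fin n) (Fin n) ℂ →L[ℂ] (Fin m → ℂ) :=
  LinearMap.toContinuousLinearMap
    { toFun := fun M => (Q * M) *ᵥ v
      map_add' := fun M N => by
        show (Q * (M + N)) *ᵥ v = (Q * M) *ᵥ v + (Q * N) *ᵥ v
        rw [Matrix.mul_add, Matrix.add_mulVec]
      map_smul' := fun c M => by
        show (Q * (c • M)) *ᵥ v = c • ((Q * M) *ᵥ v)
        rw [Matrix.mul_smul, Matrix.smul_mulVec] }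

section core
attribute [local instance] Matrix.linftyOpNormedAddCommGroup Matrix.linftyOpNormedRing
  Matrix.linftyOpNormedAlgebra

variable {n m : ℕ}

-- derivative of t ↦ (Q * exp (t • N)) *ᵥ v
lemma hasDerivAt_mv (N : Matrix (Fin n) (Fin n) ℂ) (Q : Matrix (Fin m) (Fin n) ℂ)
    (v : Fin n → ℂ) (t : ℝ) :
    HasDerivAt (fun s : ℝ => (Q * exp (s • N)) *ᵥ v)
      ((Q * (N * exp (t • N))) *ᵥ v) t := by
  have hg : HasDerivAt (fun s : ℝ => exp (s • N)) (N * exp (t • N)) t :=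
    hasDerivAt_exp_smul_const' N t
  have := (((mvCLM Q v).restrictScalars ℝ).hasFDerivAt).comp_hasDerivAt t hg
  exact this

/-- Finite-dimensional Hautus test / pole placement: if no eigenvector `ε` of `Aᴴ`
satisfies `Bᴴ ε = 0` (except `ε = 0`), then for every `σ > 0` there exists a feedback
matrix `G` such that all eigenvalues of `A + B G` have real part `< -σ`. -/
theorem hautus_implies_complete_stabilizability {n m : ℕ}
    (A : Matrix (Fin n) (Fin n) ℂ) (B : Matrix (Fin n) (Fin m) ℂ)
    (hHautus : ∀ (ε : Fin n → ℂ) (μ : ℂ), Aᴴ *ᵥ ε = μ • ε → Bᴴ *ᵥ ε = 0 → ε = 0) :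
    ∀ σ > (0 : ℝ), ∃ G : Matrix (Fin m) (Fin n) ℂ,
      ∀ μ ∈ spectrum ℂ (A + B * G), μ.re < -σ := by
  intro σ hσ
  set γ : ℝ := σ + 1 with hγ
  set C : Matrix (Fin n) (Fin n) ℂ := A + (γ : ℂ) • 1 with hC
  set f : ℝ → Matrix (Fin n) (Fin n) ℂ := fun t => exp (t • (-C)) with hf
  set g : ℝ → Matrix (Fin n) (Fin n) ℂ := fun t => exp (t • (-Cᴴ)) with hg
  set D : Matrix (Fin n) (Fin n) ℂ := B * Bᴴ with hD
  set F : ℝ → Matrix (Fin n) (Fin n) ℂ := fun t => f t * D * g t with hF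
  have hCH : Cᴴ = Aᴴ + (γ : ℂ) • 1 := by
    rw [hC, conjTranspose_add, conjTranspose_smul, conjTranspose_one]
    norm_num
  have hfg : ∀ t, (f t)ᴴ = g t := by
    intro t
    rw [hf, hg, ← Matrix.exp_conjTranspose, conjTranspose_smul, conjTranspose_neg]
    norm_num
  have hgf : ∀ t, (g t)ᴴ = f t := fun t => by rw [← hfg t, conjTranspose_conjTranspose]
  have hfc : Continuous f := exp_continuous.comp (continuous_id.smul continuous_const)
  have hgc : Continuous g := exp_continuous.comp (continuous_id.smul continuous_const)
  have hFc : Continuous F := (hfc.mul continuous_const).mul hgc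
  have hFi : IntervalIntegrable F MeasureTheory.volume 0 1 := hFc.intervalIntegrable 0 1
  set W : Matrix (Fin n) (Fin n) ℂ := ∫ t in (0:ℝ)..1, F t with hW
  have hf0 : f 0 = 1 := by rw [hf]; simp [exp_zero]
  have hg0 : g 0 = 1 := by rw [hg]; simp [exp_zero]
  have hF0 : F 0 = D := by rw [hF]; simp [hf0, hg0]
  -- Hermitian-ness of the integrand and of W
  have hFherm : ∀ t, (F t)ᴴ = F t := by
    intro t
    rw [hF]
    simp only [conjTranspose_mul, hfg, hgf, hD, conjTranspose_mul,
      conjTranspose_conjTranspose]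
    rw [Matrix.mul_assoc, Matrix.mul_assoc, Matrix.mul_assoc]
  have hWherm : Wᴴ = W := by
    rw [hW, ct_integral F hFi]
    simp only [hFherm]
  -- Lyapunov identity
  have hLyap : C * W + W * Cᴴ = D - F 1 := by
    have hder : ∀ t ∈ Set.uIcc (0:ℝ) 1,
        HasDerivAt F (-(C * F t) - F t * Cᴴ) t := by
      intro t _
      have hf' : HasDerivAt f (-C * f t) t := hasDerivAt_exp_smul_const' (-C) t
      have hg' : HasDerivAt g (g t * -Cᴴ) t := hasDerivAt_exp_smul_const (-Cᴴ) t
      have := (hf'.mul_const D).mul hg'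
      convert this using 1
      case e'_4 => rfl
      case e'_5 => rfl
      case e'_6 => rfl
      case e'_8 => rfl
      rw [hF]
      simp only [Matrix.neg_mul, Matrix.mul_neg]
      noncomm_ring
    have hderc : Continuous fun t => -(C * F t) - F t * Cᴴ :=
      ((continuous_const.mul hFc).neg).sub (hFc.mul continuous_const)
    have hFTC := intervalIntegral.integral_eq_sub_of_hasDerivAt hder
      (hderc.intervalIntegrable 0 1)
    have hsplit : (∫ t in (0:ℝ)..1, (-(C * F t) - F t * Cᴴ))
        = -(C * W + W * Cᴴ) := by
      rw [intervalIntegral.integral_sub (f := fun t => -(C * F t)) (g := fun t => F t * Cᴴ) (((continuous_const.mul hFc).neg).intervalIntegrable _ _)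
        ((hFc.mul continuous_const).intervalIntegrable _ _),
        intervalIntegral.integral_neg, ← mulL_integral C F hFi, ← mulR_integral Cᴴ F hFi]
      rw [← hW]; abel
    rw [hsplit, hF0] at hFTC
    have := congrArg Neg.neg hFTC
    simp only [neg_neg, neg_sub] at this
    rw [this]
  -- quadratic form of W as an integral of squares
  set r : (Fin n → ℂ) → ℝ → ℝ :=
    fun v t => ∑ i, Complex.normSq (((Bᴴ * g t) *ᵥ v) i) with hr
  have hF1fact : ∀ t, F t = (f t * B) * (f t * B)ᴴ := by
    intro t
    rw [hF]
    simp only [conjTranspose_mul, hfg]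
    rw [hD, Matrix.mul_assoc, Matrix.mul_assoc, Matrix.mul_assoc]
  have hq : ∀ v : Fin n → ℂ,
      star v ⬝ᵥ (W *ᵥ v) = ((∫ t in (0:ℝ)..1, r v t : ℝ) : ℂ) := by
    intro v
    rw [hW, qf_integral v F hFi]
    rw [← intervalIntegral.integral_ofReal]
    apply intervalIntegral.integral_congr
    intro t _
    show star v ⬝ᵥ (F t *ᵥ v) = ((r v t : ℝ) : ℂ)
    rw [hF1fact t, sq_form]
    congr 2
    rw [conjTranspose_mul, hfg]
  have hrc : ∀ v, Continuous (r v) := by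
    intro v
    apply continuous_finset_sum
    intro i _
    apply Complex.continuous_normSq.comp
    have : Continuous fun t => (Bᴴ * g t) *ᵥ v := by
      have h1 : Continuous fun t => (mvCLM Bᴴ v) (g t) :=
        (mvCLM Bᴴ v).continuous.comp hgc
      simpa [mvCLM] using h1
    exact (continuous_apply i).comp this
  have hrnn : ∀ v t, 0 ≤ r v t := by
    intro v t
    exact Finset.sum_nonneg fun i _ => Complex.normSq_nonneg _
  have hIpos : ∀ v : Fin n → ℂ, v ≠ 0 → 0 < ∫ t in (0:ℝ)..1, r v t := by
    intro v hv0
    have hnn : 0 ≤ ∫ t in (0:ℝ)..1, r v t :=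
      intervalIntegral.integral_nonneg zero_le_one fun t _ => hrnn v t
    rcases hnn.lt_or_eq with h | h
    · exact h
    exfalso
    -- the integral vanishes: propagate to all powers
    set J : ℝ → ℝ := fun s => ∫ t in (0:ℝ)..s, r v t with hJ
    have hJd : ∀ t : ℝ, HasDerivAt J (r v t) t := by
      intro t
      exact intervalIntegral.integral_hasDerivAt_right
        ((hrc v).intervalIntegrable 0 t)
        ((hrc v).stronglyMeasurableAtFilter _ _)
        (hrc v).continuousAt
    have hJ0 : ∀ t ∈ Set.Ico (0:ℝ) 1, J t = 0 := by
      intro t ht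
      have h1 : (0:ℝ) ≤ J t :=
        intervalIntegral.integral_nonneg ht.1 fun s _ => hrnn v s
      have h2 : J t + ∫ s in t..1, r v s = ∫ s in (0:ℝ)..1, r v s :=
        intervalIntegral.integral_add_adjacent_intervals
          ((hrc v).intervalIntegrable 0 t) ((hrc v).intervalIntegrable t 1)
      have h3 : (0:ℝ) ≤ ∫ s in t..1, r v s :=
        intervalIntegral.integral_nonneg ht.2.le fun s _ => hrnn v s
      rw [← h] at h2
      linarith
    have hr0 : ∀ t ∈ Set.Ico (0:ℝ) 1, r v t = 0 := zero_deriv_on_Ico hJd hJ0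
    have hw0 : ∀ t ∈ Set.Ico (0:ℝ) 1, (Bᴴ * g t) *ᵥ v = 0 := by
      intro t ht
      funext i
      have := (Finset.sum_eq_zero_iff_of_nonneg
        (fun j _ => Complex.normSq_nonneg (((Bᴴ * g t) *ᵥ v) j))).mp (hr0 t ht) i
        (Finset.mem_univ i)
      simpa [Complex.normSq_eq_zero] using this
    -- induction over powers
    have hpow : ∀ k : ℕ, ∀ t ∈ Set.Ico (0:ℝ) 1,
        ((Bᴴ * (-Cᴴ) ^ k) * g t) *ᵥ v = 0 := by
      intro k
      induction k with
      | zero => simpa using hw0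
      | succ k ih =>
        have hder : ∀ t : ℝ, HasDerivAt (fun s => ((Bᴴ * (-Cᴴ) ^ k) * g s) *ᵥ v)
            (((Bᴴ * (-Cᴴ) ^ (k+1)) * g t) *ᵥ v) t := by
          intro t
          have := hasDerivAt_mv (-Cᴴ) (Bᴴ * (-Cᴴ) ^ k) v t
          convert this using 2
          simp only [pow_succ, Matrix.mul_assoc, hg]
        exact zero_deriv_on_Ico hder ih
    have hBpow : ∀ k : ℕ, Bᴴ *ᵥ ((-Cᴴ) ^ k *ᵥ v) = 0 := by
      intro k
      have := hpow k 0 ⟨le_refl 0, zero_lt_one⟩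
      rw [hg0, Matrix.mul_one, ← Matrix.mulVec_mulVec] at this
      exact this
    have hH' : ∀ (ε : Fin n → ℂ) (μ : ℂ), (-Cᴴ) *ᵥ ε = μ • ε → Bᴴ *ᵥ ε = 0 → ε = 0 := by
      intro ε μ hεμ hBε
      apply hHautus ε (-μ - γ) _ hBε
      have hCε : Cᴴ *ᵥ ε = -μ • ε := by
        have h2 := congrArg Neg.neg hεμ
        rw [Matrix.neg_mulVec, neg_neg] at h2
        rw [h2, neg_smul]
      rw [hCH, Matrix.add_mulVec, Matrix.smul_mulVec, Matrix.one_mulVec] at hCε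
      have : Aᴴ *ᵥ ε = -μ • ε - (γ:ℂ) • ε := by
        rw [← hCε]; abel
      rw [this, sub_smul, neg_smul]
    exact hv0 (vanish_of_pow (-Cᴴ) B hH' v hBpow)
  -- W is invertible
  have hWunit : IsUnit W := by
    rw [← Matrix.mulVec_injective_iff_isUnit]
    intro x y hxy
    by_contra hne
    have hsub : W *ᵥ (x - y) = 0 := by
      rw [Matrix.mulVec_sub, hxy, sub_self]
    have h0 : ((∫ t in (0:ℝ)..1, r (x - y) t : ℝ) : ℂ) = 0 := by
      rw [← hq (x - y), hsub, dotProduct_zero]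
    have h1 : (∫ t in (0:ℝ)..1, r (x - y) t) = 0 := by exact_mod_cast h0
    exact (hIpos (x - y) (sub_ne_zero_of_ne hne)).ne' h1
  have hWdet : IsUnit W.det := (Matrix.isUnit_iff_isUnit_det W).mp hWunit
  have hWinvH : W⁻¹ᴴ = W⁻¹ := by
    rw [Matrix.conjTranspose_nonsing_inv, hWherm]
  refine ⟨-(Bᴴ * W⁻¹), ?_⟩
  intro μ hμ
  set Acl : Matrix (Fin n) (Fin n) ℂ := A + B * -(Bᴴ * W⁻¹) with hAcl
  have hnu : ¬IsUnit (algebraMap ℂ (Matrix (Fin n) (Fin n) ℂ) μ - Acl) :=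
    spectrum.mem_iff.mp hμ
  have hdet : ((μ : ℂ) • (1 : Matrix (Fin n) (Fin n) ℂ) - Acl).det = 0 := by
    by_contra hd
    exact hnu (by
      rw [Algebra.algebraMap_eq_smul_one]
      exact (Matrix.isUnit_iff_isUnit_det _).mpr (Ne.isUnit hd))
  have hdetH : ((starRingEnd ℂ μ) • (1 : Matrix (Fin n) (Fin n) ℂ) - Aclᴴ).det = 0 := by
    have h1 : ((μ : ℂ) • (1 : Matrix (Fin n) (Fin n) ℂ) - Acl)ᴴ
        = (starRingEnd ℂ μ) • 1 - Aclᴴ := by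
      rw [conjTranspose_sub, conjTranspose_smul, conjTranspose_one]
      rfl
    rw [← h1, Matrix.det_conjTranspose, hdet, star_zero]
  obtain ⟨v, hv0, hveq⟩ := (Matrix.exists_mulVec_eq_zero_iff).mpr hdetH
  have heig : Aclᴴ *ᵥ v = (starRingEnd ℂ μ) • v := by
    rw [Matrix.sub_mulVec, Matrix.smul_mulVec, Matrix.one_mulVec, sub_eq_zero] at hveq
    exact hveq.symm
  -- the closed-loop Lyapunov identity
  set M1 : Matrix (Fin n) (Fin n) ℂ := Acl + (γ : ℂ) • 1 with hM1
  have hM1C : M1 = C - B * (Bᴴ * W⁻¹) := by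
    rw [hM1, hAcl, hC]
    rw [Matrix.mul_neg]
    abel
  have hM1H : M1ᴴ *ᵥ v = ((starRingEnd ℂ μ) + (γ : ℂ)) • v := by
    rw [hM1, conjTranspose_add, conjTranspose_smul, conjTranspose_one,
      Matrix.add_mulVec, heig, Matrix.smul_mulVec, Matrix.one_mulVec, add_smul]
    norm_num
  have hsum : M1 * W + W * M1ᴴ = -D - F 1 := by
    have h1 : M1 * W = C * W - D := by
      rw [hM1C, Matrix.sub_mul, Matrix.mul_assoc, Matrix.mul_assoc,
        Matrix.nonsing_inv_mul W hWdet, Matrix.mul_one, hD]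
    have h2 : W * M1ᴴ = W * Cᴴ - D := by
      have hM1Ht : M1ᴴ = Cᴴ - W⁻¹ * (B * Bᴴ) := by
        rw [hM1C, conjTranspose_sub, conjTranspose_mul, conjTranspose_mul, hWinvH,
          conjTranspose_conjTranspose, Matrix.mul_assoc]
      rw [hM1Ht, Matrix.mul_sub, ← Matrix.mul_assoc, Matrix.mul_nonsing_inv W hWdet,
        Matrix.one_mul, hD]
    rw [h1, h2]
    have : C * W - D + (W * Cᴴ - D) = (C * W + W * Cᴴ) - D - D := by abel
    rw [this, hLyap]
    abel
  -- evaluate the quadratic form of both sides at v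
  have hlhs : star v ⬝ᵥ ((M1 * W + W * M1ᴴ) *ᵥ v)
      = ((μ + γ) + ((starRingEnd ℂ μ) + γ)) * (star v ⬝ᵥ (W *ᵥ v)) := by
    rw [Matrix.add_mulVec, dotProduct_add]
    have hterm1 : star v ⬝ᵥ ((M1 * W) *ᵥ v) = (μ + γ) * (star v ⬝ᵥ (W *ᵥ v)) := by
      rw [← Matrix.mulVec_mulVec, Matrix.dotProduct_mulVec]
      have hvM1 : star v ᵥ* M1 = (μ + (γ:ℂ)) • star v := by
        have h3 : star (M1ᴴ *ᵥ v) = star v ᵥ* M1 := by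
          rw [Matrix.star_mulVec, conjTranspose_conjTranspose]
        rw [← h3, hM1H, star_smul]
        congr 1
        rw [star_add, ← starRingEnd_apply, ← starRingEnd_apply, Complex.conj_conj,
          Complex.conj_ofReal]
      rw [hvM1, smul_dotProduct]
      rfl
    have hterm2 : star v ⬝ᵥ ((W * M1ᴴ) *ᵥ v)
        = ((starRingEnd ℂ μ) + γ) * (star v ⬝ᵥ (W *ᵥ v)) := by
      rw [← Matrix.mulVec_mulVec, hM1H, Matrix.mulVec_smul, dotProduct_smul]
      rfl
    rw [hterm1, hterm2]
    ring
  have hrhs : star v ⬝ᵥ ((-D - F 1) *ᵥ v)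
      = -((∑ i, Complex.normSq ((Bᴴ *ᵥ v) i) : ℝ) : ℂ)
        - ((∑ i, Complex.normSq (((f 1 * B)ᴴ *ᵥ v) i) : ℝ) : ℂ) := by
    rw [Matrix.sub_mulVec, dotProduct_sub, Matrix.neg_mulVec, dotProduct_neg]
    rw [hD, sq_form B v, hF1fact 1, sq_form (f 1 * B) v]
  have hEq := hlhs.symm.trans (by rw [hsum, hrhs] :
    star v ⬝ᵥ ((M1 * W + W * M1ᴴ) *ᵥ v)
      = -((∑ i, Complex.normSq ((Bᴴ *ᵥ v) i) : ℝ) : ℂ)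
        - ((∑ i, Complex.normSq (((f 1 * B)ᴴ *ᵥ v) i) : ℝ) : ℂ))
  rw [hq v] at hEq
  set I1 : ℝ := ∫ t in (0:ℝ)..1, r v t with hI1
  set a0 : ℝ := ∑ i, Complex.normSq ((Bᴴ *ᵥ v) i) with ha0d
  set a1 : ℝ := ∑ i, Complex.normSq (((f 1 * B)ᴴ *ᵥ v) i) with ha1d
  have h5 : μ + ↑γ + ((starRingEnd ℂ) μ + ↑γ) = ((2 * μ.re + 2 * γ : ℝ) : ℂ) := by
    have h6 := Complex.add_conj μ
    rw [show μ + ↑γ + ((starRingEnd ℂ) μ + ↑γ)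
      = (μ + (starRingEnd ℂ) μ) + 2 * ↑γ by ring, h6]
    push_cast
    ring
  rw [h5] at hEq
  have hkey2 : (2 * μ.re + 2 * γ) * I1 = -a0 - a1 := by
    exact_mod_cast hEq
  have hI : 0 < I1 := hIpos v hv0
  have ha0 : (0:ℝ) ≤ a0 := Finset.sum_nonneg fun i _ => Complex.normSq_nonneg _
  have ha1 : (0:ℝ) ≤ a1 := Finset.sum_nonneg fun i _ => Complex.normSq_nonneg _
  have hγσ : γ = σ + 1 := hγ
  nlinarith [hkey2, hI, ha0, ha1, hσ]

end core
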